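/- In the signature with exactly two constant symbols a,b, with X = {χₙ | n ∈ ℕ} where χₙ is a classical sentence expressing that the domain has at least n elements: for every finite subset X₀ ⊆ X, it is NOT the case that X₀ ∪ {η} ⊨_id θ. A counter-model is the canonical full id-model M_D over a set D with k+1 elements, k the largest n with χₙ ∈ X₀: M_D supports every member of X₀ and η, but does not support θ. -/

import Mathlib

namespace InqBQ

/-- A signature: predicate symbols and function symbols, each with an arity. -/
structure Sig where
  Pred : Type
  parity : Pred → ℕ
  Func : Type
  farity : Func → ℕ

/-- Terms over a signature, with variables indexed by `ℕ`. -/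
inductive Term (σ : Sig) : Type where
  | var : ℕ → Term σ
  | func : (f : σ.Func) → (Fin (σ.farity f) → Term σ) → Term σ

/-- Formulas of InqBQ. -/
inductive Formula (σ : Sig) : Type where
  | pred : (P : σ.Pred) → (Fin (σ.parity P) → Term σ) → Formula σ
  | eq : Term σ → Term σ → Formula σ
  | falsum : Formula σ
  | conj : Formula σ → Formula σ → Formula σ
  | idisj : Formula σ → Formula σ → Formula σ
  | impl : Formula σ → Formula σ → Formula σ
  | all : ℕ → Formula σ → Formula σ
  | iex : ℕ → Formula σ → Formula σ

variable {σ : Sig}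

/-- ¬φ := φ → ⊥ -/
def Formula.neg (φ : Formula σ) : Formula σ := .impl φ .falsum

/-- ?φ := φ ⩒ ¬φ -/
def Formula.qm (φ : Formula σ) : Formula σ := .idisj φ φ.neg

/-- ⊤ := ¬⊥ -/
def Formula.verum : Formula σ := Formula.neg .falsum

/-- Classical formulas: no inquisitive disjunction, no inquisitive existential. -/
def Formula.IsClassical : Formula σ → Prop
  | .pred _ _ => True
  | .eq _ _ => True
  | .falsum => True
  | .conj φ ψ => φ.IsClassical ∧ ψ.IsClassical
  | .idisj _ _ => False
  | .impl φ ψ => φ.IsClassical ∧ ψ.IsClassical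
  | .all _ φ => φ.IsClassical
  | .iex _ _ => False

/-- The variable `n` occurs in a term. -/
def Term.VarOccurs : Term σ → ℕ → Prop
  | .var m, n => m = n
  | .func _ ts, n => ∃ i, (ts i).VarOccurs n

/-- The variable `n` occurs free in a formula. -/
def Formula.FreeVar : Formula σ → ℕ → Prop
  | .pred _ ts, n => ∃ i, (ts i).VarOccurs n
  | .eq t t', n => t.VarOccurs n ∨ t'.VarOccurs n
  | .falsum, _ => False
  | .conj φ ψ, n => φ.FreeVar n ∨ ψ.FreeVar n
  | .idisj φ ψ, n => φ.FreeVar n ∨ ψ.FreeVar n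
  | .impl φ ψ, n => φ.FreeVar n ∨ ψ.FreeVar n
  | .all x φ, n => n ≠ x ∧ φ.FreeVar n
  | .iex x φ, n => n ≠ x ∧ φ.FreeVar n

/-- A sentence is a formula with no free variables. -/
def Formula.IsSentence (φ : Formula σ) : Prop := ∀ n, ¬ φ.FreeVar n

/-- A first-order information model `M = (W, D, I, ∼)`. -/
structure Model (σ : Sig) where
  W : Type
  D : Type
  wNonempty : Nonempty W
  dNonempty : Nonempty D
  predI : W → (P : σ.Pred) → (Fin (σ.parity P) → D) → Prop
  funcI : W → (f : σ.Func) → (Fin (σ.farity f) → D) → D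
  eqI : W → D → D → Prop
  eqEquiv : ∀ w, Equivalence (eqI w)
  predCongr : ∀ w P (as bs : Fin (σ.parity P) → D),
      (∀ i, eqI w (as i) (bs i)) → (predI w P as ↔ predI w P bs)
  funcCongr : ∀ w f (as bs : Fin (σ.farity f) → D),
      (∀ i, eqI w (as i) (bs i)) → eqI w (funcI w f as) (funcI w f bs)

/-- Denotation `[t]^g_w` of a term at a world under an assignment. -/
def Term.val (M : Model σ) (w : M.W) (g : ℕ → M.D) : Term σ → M.D
  | .var n => g n
  | .func f ts => M.funcI w f (fun i => (ts i).val M w g)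

/-- The support relation `M, s ⊨_g φ`. -/
def Support (M : Model σ) : Set M.W → (ℕ → M.D) → Formula σ → Prop
  | s, g, .pred P ts => ∀ w ∈ s, M.predI w P (fun i => (ts i).val M w g)
  | s, g, .eq t t' => ∀ w ∈ s, M.eqI w (t.val M w g) (t'.val M w g)
  | s, _, .falsum => s = ∅
  | s, g, .conj φ ψ => Support M s g φ ∧ Support M s g ψ
  | s, g, .idisj φ ψ => Support M s g φ ∨ Support M s g ψ
  | s, g, .impl φ ψ => ∀ t : Set M.W, t ⊆ s → Support M t g φ → Support M t g ψ
  | s, g, .all x φ => ∀ d : M.D, Support M s (Function.update g x d) φ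
  | s, g, .iex x φ => ∃ d : M.D, Support M s (Function.update g x d) φ

/-- Id-models: `=` is interpreted as identity on the domain at each world. -/
def Model.IsId (M : Model σ) : Prop := ∀ w (d d' : M.D), M.eqI w d d' ↔ d = d'

/-- Entailment in InqBQ. -/
def Entails (Φ : Set (Formula σ)) (ψ : Formula σ) : Prop :=
  ∀ (M : Model σ) (s : Set M.W) (g : ℕ → M.D),
    (∀ φ ∈ Φ, Support M s g φ) → Support M s g ψ

/-- Entailment restricted to id-models. -/
def EntailsId (Φ : Set (Formula σ)) (ψ : Formula σ) : Prop :=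
  ∀ (M : Model σ), M.IsId → ∀ (s : Set M.W) (g : ℕ → M.D),
    (∀ φ ∈ Φ, Support M s g φ) → Support M s g ψ

/-- Validity in InqBQ. -/
def Valid (ψ : Formula σ) : Prop :=
  ∀ (M : Model σ) (s : Set M.W) (g : ℕ → M.D), Support M s g ψ

/-- Validity over id-models. -/
def IdValid (ψ : Formula σ) : Prop :=
  ∀ (M : Model σ), M.IsId → ∀ (s : Set M.W) (g : ℕ → M.D), Support M s g ψ

/-- Equivalence of formulas. -/
def FmEquiv (φ ψ : Formula σ) : Prop :=
  ∀ (M : Model σ) (s : Set M.W) (g : ℕ → M.D), Support M s g φ ↔ Support M s g ψ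

/-- A formula is truth-conditional if support at a state reduces to truth at each world. -/
def TruthConditional (φ : Formula σ) : Prop :=
  ∀ (M : Model σ) (s : Set M.W) (g : ℕ → M.D),
    Support M s g φ ↔ ∀ w ∈ s, Support M {w} g φ

/-- A standard (Tarskian) relational structure for the signature. -/
structure Struc (σ : Sig) where
  D : Type
  dNonempty : Nonempty D
  predI : (P : σ.Pred) → (Fin (σ.parity P) → D) → Prop
  funcI : (f : σ.Func) → (Fin (σ.farity f) → D) → D

/-- Tarskian term denotation. -/
def Term.tval (A : Struc σ) (g : ℕ → A.D) : Term σ → A.D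
  | .var n => g n
  | .func f ts => A.funcI f (fun i => (ts i).tval A g)

/-- Standard Tarskian satisfaction (reading `→` as material implication, `=` as identity). -/
def TSat (A : Struc σ) : (ℕ → A.D) → Formula σ → Prop
  | g, .pred P ts => A.predI P (fun i => (ts i).tval A g)
  | g, .eq t t' => t.tval A g = t'.tval A g
  | _, .falsum => False
  | g, .conj φ ψ => TSat A g φ ∧ TSat A g ψ
  | g, .idisj φ ψ => TSat A g φ ∨ TSat A g ψ
  | g, .impl φ ψ => TSat A g φ → TSat A g ψ
  | g, .all x φ => ∀ d : A.D, TSat A (Function.update g x d) φ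
  | g, .iex x φ => ∃ d : A.D, TSat A (Function.update g x d) φ

/-- Classical first-order (Tarskian) entailment. -/
def FOLEntails (Γ : Set (Formula σ)) (α : Formula σ) : Prop :=
  ∀ (A : Struc σ) (g : ℕ → A.D), (∀ γ ∈ Γ, TSat A g γ) → TSat A g α

/-- The setoid on the domain given by `∼_w`. -/
def Model.setoidAt (M : Model σ) (w : M.W) : Setoid M.D := ⟨M.eqI w, M.eqEquiv w⟩

/-- The quotient relational structure `𝓜_w = (D/∼_w, I_w^∼)` induced at world `w`. -/
noncomputable def Model.quotStruc (M : Model σ) (w : M.W) : Struc σ where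
  D := Quotient (M.setoidAt w)
  dNonempty := Nonempty.map (Quotient.mk (M.setoidAt w)) M.dNonempty
  predI P as := ∃ bs : Fin (σ.parity P) → M.D,
    (∀ i, Quotient.mk (M.setoidAt w) (bs i) = as i) ∧ M.predI w P bs
  funcI f as := Quotient.mk (M.setoidAt w) (M.funcI w f (fun i => (as i).out))

/-- λt := ∃̷x (x = t). -/
def lam (x : ℕ) (t : Term σ) : Formula σ := .iex x (.eq (.var x) t)

/-- Conjunction of a finite list of formulas. -/
def conjList (l : List (Formula σ)) : Formula σ := l.foldr .conj Formula.verum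

/-- x ≠ t. -/
def neTm (x : ℕ) (t : Term σ) : Formula σ := (Formula.eq (.var x) t).neg

/-- ∃̷x (x ≠ t). -/
def iexNe (t : Term σ) : Formula σ := .iex 0 (neTm 0 t)

/-- η := (=(a;b) ∧ =(b;a) ∧ ∃̷x(x≠b)) → ∃̷x(x≠a). -/
def etaOf (a b : Term σ) : Formula σ :=
  .impl (.conj (.impl (lam 0 a) (lam 0 b))
          (.conj (.impl (lam 0 b) (lam 0 a)) (iexNe b)))
    (iexNe a)

/-- θ := ∃̷x ∃̷y ¬(x = a ∧ y = b). -/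
def thetaOf (a b : Term σ) : Formula σ :=
  .iex 0 (.iex 1 (Formula.neg (.conj (.eq (.var 0) a) (.eq (.var 1) b))))

/-- ρ := ∀x∀y ?(x = y). -/
def rho : Formula σ := .all 0 (.all 1 (Formula.qm (.eq (.var 0) (.var 1))))

/-- The signature with exactly two constant symbols `a`, `b` (and no predicates). -/
def sigAB : Sig where
  Pred := Empty
  parity := fun P => P.elim
  Func := Bool
  farity := fun _ => 0

/-- The constant `a`. -/
def tA : Term sigAB := .func false Fin.elim0

/-- The constant `b`. -/
def tB : Term sigAB := .func true Fin.elim0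

def etaAB : Formula sigAB := etaOf tA tB

def thetaAB : Formula sigAB := thetaOf tA tB

/-- `a_w`. -/
def aVal (M : Model sigAB) (w : M.W) : M.D := M.funcI w false Fin.elim0

/-- `b_w`. -/
def bVal (M : Model sigAB) (w : M.W) : M.D := M.funcI w true Fin.elim0

/-- `R_s = {(a_w, b_w) | w ∈ s}`. -/
def RelOf (M : Model sigAB) (s : Set M.W) : Set (M.D × M.D) :=
  {p | ∃ w ∈ s, p = (aVal M w, bVal M w)}

/-- An id-model (for the signature with the two constants a, b) is full if `R_W = D × D`. -/
def Model.IsFull (M : Model sigAB) : Prop := RelOf M Set.univ = Set.univ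

/-- Classical existential quantifier ∃xφ := ¬∀x¬φ. -/
def cExists (x : ℕ) (φ : Formula σ) : Formula σ := (Formula.all x φ.neg).neg

/-- ⋀_{i<j<n} (xᵢ ≠ xⱼ). -/
def distinctFm (n : ℕ) : Formula sigAB :=
  conjList ((List.range n).flatMap fun i => (List.range n).filterMap fun j =>
    if i < j then some ((Formula.eq (.var i) (.var j)).neg) else none)

/-- χₙ := ∃x₁…∃xₙ ⋀_{i<j} (xᵢ ≠ xⱼ), expressing that there are at least n elements. -/
def chi (n : ℕ) : Formula sigAB := (List.range n).foldr cExists (distinctFm n)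

/-- The canonical full id-model over a nonempty domain `D`: worlds are pairs `(d, e)`,
with `a_{(d,e)} = d` and `b_{(d,e)} = e`. -/
def canonModel (D : Type) (hD : Nonempty D) : Model sigAB where
  W := D × D
  D := D
  wNonempty := Nonempty.map (fun d => (d, d)) hD
  dNonempty := hD
  predI := fun _ P => P.elim
  funcI := fun w f _ => cond f w.2 w.1
  eqI := fun _ => Eq
  eqEquiv := fun _ => eq_equivalence
  predCongr := fun _ P => P.elim
  funcCongr := fun _ _ _ _ _ => rfl

/-- Extending a signature with two fresh constant symbols `a`, `b`. -/
def sigExt (σ : Sig) : Sig where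
  Pred := σ.Pred
  parity := σ.parity
  Func := σ.Func ⊕ Bool
  farity := Sum.elim σ.farity (fun _ => 0)

/-- Lift of a term to the extended signature. -/
def Term.lift : Term σ → Term (sigExt σ)
  | .var n => .var n
  | .func f ts => .func (Sum.inl f) (fun i => (ts i).lift)

/-- Lift of a formula to the extended signature. -/
def Formula.lift : Formula σ → Formula (sigExt σ)
  | .pred P ts => .pred P (fun i => (ts i).lift)
  | .eq t t' => .eq t.lift t'.lift
  | .falsum => .falsum
  | .conj φ ψ => .conj φ.lift ψ.lift
  | .idisj φ ψ => .idisj φ.lift ψ.lift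
  | .impl φ ψ => .impl φ.lift ψ.lift
  | .all x φ => .all x φ.lift
  | .iex x φ => .iex x φ.lift

/-- The fresh constant `a` of the extended signature. -/
def extA : Term (sigExt σ) := .func (Sum.inr false) Fin.elim0

/-- The fresh constant `b` of the extended signature. -/
def extB : Term (sigExt σ) := .func (Sum.inr true) Fin.elim0

/-- The canonical full id-model based on a relational structure `𝓜`: worlds are pairs
`(d, e)`; `a_{(d,e)} = d`, `b_{(d,e)} = e`, and all symbols of `σ` are interpreted
rigidly as in `𝓜`. -/
def canonModelOf (A : Struc σ) : Model (sigExt σ) where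
  W := A.D × A.D
  D := A.D
  wNonempty := Nonempty.map (fun d => (d, d)) A.dNonempty
  dNonempty := A.dNonempty
  predI := fun _ P => A.predI P
  funcI := fun w f => match f with
    | .inl f₀ => fun as => A.funcI f₀ as
    | .inr b => fun _ => cond b w.2 w.1
  eqI := fun _ => Eq
  eqEquiv := fun _ => eq_equivalence
  predCongr := fun _ P as bs h => by
    have hab : as = bs := funext fun i => h i
    rw [hab]
  funcCongr := fun w f as bs h => by
    have hab : as = bs := funext fun i => h i
    rw [hab]

/-!
In the canonical full id-model `M_D` the constants `a`, `b` range over all of `D × D`, so every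
`x = a ∧ y = b` is supported by some nonempty state and `θ` fails. A state supporting `=(b;a)`
and `∃̷x(x≠b)` makes `a_w ↦ b_w` an injection from the `a`-values into `D` minus a point;
when `D` is finite the `a`-values therefore miss a point too, which is `η`. The sentences
`χₙ` are classical, hence truth-conditional, and true in `D` once `n ≤ |D|`.
-/

theorem _root_.Set.Finite.exists_le_of_subset_range {α : Type*} {f : ℕ → α} {X : Set α}
    (hX : X.Finite) (hXf : X ⊆ Set.range f) : ∃ k, ∀ x ∈ X, ∃ n ≤ k, f n = x := by
  choose! m hm using show ∀ x ∈ X, ∃ n, f n = x from hXf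
  obtain ⟨k, hk⟩ := (hX.image m).bddAbove
  exact ⟨k, fun x hx => ⟨m x, hk (Set.mem_image_of_mem m hx), hm x hx⟩⟩

section Semantics

variable {M : Model σ} {s : Set M.W} {g : ℕ → M.D}

def Model.strucAt (M : Model σ) (w : M.W) : Struc σ where
  D := M.D
  dNonempty := M.dNonempty
  predI := M.predI w
  funcI := M.funcI w

theorem Term.val_eq_tval (M : Model σ) (w : M.W) (g : ℕ → M.D) (t : Term σ) :
    t.val M w g = t.tval (M.strucAt w) g := by
  induction t with
  | var n => rfl
  | func f ts ih => simp only [Term.val, Term.tval, ih]; rfl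

theorem support_iff_forall_tsat (hM : M.IsId) {φ : Formula σ} (hφ : φ.IsClassical) :
    Support M s g φ ↔ ∀ w ∈ s, TSat (M.strucAt w) g φ := by
  induction φ generalizing s g with
  | pred P ts => simp only [Support, TSat, Term.val_eq_tval]; rfl
  | eq t t' =>
    simp only [Support, TSat, Term.val_eq_tval]
    exact forall₂_congr fun w _ => hM w _ _
  | falsum => simp [Support, TSat, Set.eq_empty_iff_forall_notMem]
  | conj φ ψ ihφ ihψ =>
    simp only [Support, TSat, ihφ hφ.1, ihψ hφ.2]
    exact forall₂_and.symm
  | impl φ ψ ihφ ihψ =>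
    simp only [Support, ihφ hφ.1, ihψ hφ.2, TSat]
    refine ⟨fun h w hw hwφ => h {w} (Set.singleton_subset_iff.2 hw) (by simpa using hwφ) w rfl,
      fun h t hts htφ w hw => h w (hts hw) (htφ w hw)⟩
  | all x φ ih =>
    simp only [Support, TSat, ih hφ]
    exact ⟨fun h w hw d => h d w hw, fun h d w hw => h w hw d⟩
  | idisj | iex => exact hφ.elim

end Semantics

section Support

variable {M : Model σ} {s : Set M.W} {g : ℕ → M.D}

theorem support_lam_iff (hM : M.IsId) {x : ℕ} {t : Term σ} :
    Support M s g (lam x t) ↔ ∃ d, ∀ w ∈ s, d = t.val M w (Function.update g x d) := by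
  simp only [lam, Support, Term.val, Function.update_self]
  exact exists_congr fun d => forall₂_congr fun w _ => hM w _ _

theorem support_neg_eq_iff {t t' : Term σ} :
    Support M s g (Formula.eq t t').neg ↔
      ∀ w ∈ s, ¬ M.eqI w (t.val M w g) (t'.val M w g) := by
  refine ⟨fun h w hw heq => Set.singleton_ne_empty w ?_, fun h u hus hu => ?_⟩
  · exact h {w} (Set.singleton_subset_iff.2 hw) fun _ hw' => hw' ▸ heq
  · exact Set.eq_empty_iff_forall_notMem.2 fun w hw => h w (hus hw) (hu w hw)

theorem support_iexNe_iff (hM : M.IsId) {t : Term σ} :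
    Support M s g (iexNe t) ↔ ∃ d, ∀ w ∈ s, d ≠ t.val M w (Function.update g 0 d) := by
  simp only [iexNe, neTm, Support, support_neg_eq_iff, Term.val, Function.update_self]
  exact exists_congr fun d => forall₂_congr fun w _ => not_congr (hM w _ _)

end Support

section Classical

theorem isClassical_conjList {l : List (Formula σ)} (h : ∀ φ ∈ l, φ.IsClassical) :
    (conjList l).IsClassical := by
  induction l with
  | nil => exact ⟨trivial, trivial⟩
  | cons φ l ih =>
    exact ⟨h φ List.mem_cons_self, ih fun ψ hψ => h ψ (List.mem_cons_of_mem φ hψ)⟩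

theorem isClassical_foldr_cExists {φ : Formula σ} (hφ : φ.IsClassical) (l : List ℕ) :
    (l.foldr cExists φ).IsClassical := by
  induction l with
  | nil => exact hφ
  | cons x l ih => exact ⟨⟨ih, trivial⟩, trivial⟩

variable {A : Struc σ} {g : ℕ → A.D}

theorem tsat_conjList_iff {l : List (Formula σ)} :
    TSat A g (conjList l) ↔ ∀ φ ∈ l, TSat A g φ := by
  induction l with
  | nil => simp [conjList, Formula.verum, Formula.neg, TSat]
  | cons φ l ih =>
    simp only [conjList, List.foldr_cons, TSat, List.forall_mem_cons] at ih ⊢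
    rw [ih]

theorem tsat_cExists_iff {x : ℕ} {φ : Formula σ} :
    TSat A g (cExists x φ) ↔ ∃ d, TSat A (Function.update g x d) φ := by
  simp [cExists, Formula.neg, TSat]

theorem tsat_foldr_cExists_of_eqOn {φ : Formula σ} {l : List ℕ} {v : ℕ → A.D}
    (hv : ∀ x ∉ l, v x = g x) (hφ : TSat A v φ) : TSat A g (l.foldr cExists φ) := by
  induction l generalizing g with
  | nil => rwa [← funext fun x => hv x List.not_mem_nil]
  | cons x l ih =>
    refine tsat_cExists_iff.2 ⟨v x, ih fun y hy => ?_⟩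
    by_cases hyx : y = x
    · simp [hyx]
    · rw [Function.update_of_ne hyx]
      exact hv y (by simp [hyx, hy])

end Classical

theorem exists_of_mem_distinctFm_conjuncts {n : ℕ} {φ : Formula sigAB}
    (h : φ ∈ (List.range n).flatMap fun i => (List.range n).filterMap fun j =>
      if i < j then some ((Formula.eq (.var i) (.var j)).neg) else none) :
    ∃ i j, j < n ∧ i < j ∧ φ = (Formula.eq (.var i) (.var j)).neg := by
  simp only [List.mem_flatMap, List.mem_filterMap, List.mem_range, Option.ite_none_right_eq_some,
    Option.some.injEq] at h
  obtain ⟨i, -, j, hj, hij, rfl⟩ := h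
  exact ⟨i, j, hj, hij, rfl⟩

theorem isClassical_chi (n : ℕ) : (chi n).IsClassical := by
  refine isClassical_foldr_cExists (isClassical_conjList fun φ hφ => ?_) _
  obtain ⟨i, j, -, -, rfl⟩ := exists_of_mem_distinctFm_conjuncts hφ
  exact ⟨trivial, trivial⟩

theorem tsat_distinctFm {A : Struc sigAB} {n : ℕ} {g : ℕ → A.D}
    (hg : Set.InjOn g (Set.Iio n)) :
    TSat A g (distinctFm n) := by
  refine tsat_conjList_iff.2 fun φ hφ => ?_
  obtain ⟨i, j, hj, hij, rfl⟩ := exists_of_mem_distinctFm_conjuncts hφ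
  exact fun heq => hij.ne (hg (hij.trans hj) hj heq)

theorem tsat_chi {A : Struc sigAB} {n : ℕ} (e : Fin n ↪ A.D) (g : ℕ → A.D) :
    TSat A g (chi n) := by
  classical
  let v : ℕ → A.D := fun x => if h : x < n then e ⟨x, h⟩ else g x
  refine tsat_foldr_cExists_of_eqOn (v := v) (fun x hx => dif_neg (by simpa using hx))
    (tsat_distinctFm fun i hi j hj hij => ?_)
  simp only [v, dif_pos (Set.mem_Iio.1 hi), dif_pos (Set.mem_Iio.1 hj)] at hij
  simpa using e.injective hij

theorem support_chi_of_le_card {M : Model sigAB} (hM : M.IsId) [Finite M.D] {n : ℕ}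
    (hn : n ≤ Nat.card M.D) (s : Set M.W) (g : ℕ → M.D) : Support M s g (chi n) :=
  (support_iff_forall_tsat hM (isClassical_chi n)).2 fun w _ =>
    tsat_chi (A := M.strucAt w)
      ((Fin.castLEEmb hn).trans (Finite.equivFin M.D).symm.toEmbedding) g

section TwoConstants

variable {M : Model sigAB} {s : Set M.W} {g : ℕ → M.D}

theorem val_tA (w : M.W) : tA.val M w g = aVal M w :=
  congrArg (M.funcI w false) (funext fun i => Fin.elim0 i)

theorem val_tB (w : M.W) : tB.val M w g = bVal M w :=
  congrArg (M.funcI w true) (funext fun i => Fin.elim0 i)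

theorem support_etaAB_of_finite (hM : M.IsId) [Finite M.D] : Support M s g etaAB := by
  rintro t - ⟨-, hba, hb⟩
  obtain ⟨e, he⟩ := (support_iexNe_iff hM).1 hb
  refine (support_iexNe_iff hM).2 ?_
  simp only [val_tA, val_tB] at he ⊢
  by_contra! hcover
  choose w hwt hw using hcover
  have hinj : Function.Injective fun d => bVal M (w d) := by
    intro d d' hbb
    have hpair : {w d, w d'} ⊆ t :=
      Set.insert_subset (hwt d) (Set.singleton_subset_iff.2 (hwt d'))
    have hb' : Support M {w d, w d'} g (lam 0 tB) := by
      refine (support_lam_iff hM).2 ⟨bVal M (w d), ?_⟩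
      simp only [Set.mem_insert_iff, Set.mem_singleton_iff, forall_eq_or_imp, forall_eq, val_tB,
        true_and]
      exact hbb
    obtain ⟨c, hc⟩ := (support_lam_iff hM).1 (hba _ hpair hb')
    simp only [Set.mem_insert_iff, Set.mem_singleton_iff, forall_eq_or_imp, forall_eq, val_tA,
      ← hw] at hc
    exact hc.1.symm.trans hc.2
  obtain ⟨d, hd⟩ := Finite.injective_iff_surjective.1 hinj e
  exact he (w d) (hwt d) hd.symm

theorem not_support_thetaAB_of_isFull (hfull : M.IsFull) : ¬ Support M Set.univ g thetaAB := by
  rintro ⟨d₀, d₁, h⟩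
  obtain ⟨w, -, hw⟩ : (d₀, d₁) ∈ RelOf M Set.univ := hfull ▸ Set.mem_univ _
  obtain ⟨rfl, rfl⟩ := Prod.mk.inj hw
  refine Set.singleton_ne_empty w (h {w} (Set.subset_univ _) ⟨?_, ?_⟩) <;>
    rintro _ rfl <;>
    simp only [Term.val, val_tA, val_tB, Function.update_self,
      Function.update_of_ne (show (0 : ℕ) ≠ 1 by decide)] <;>
    exact (M.eqEquiv _).refl _

end TwoConstants

theorem canonModel_isId (D : Type) (hD : Nonempty D) : (canonModel D hD).IsId :=
  fun _ _ _ => Iff.rfl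

instance (D : Type) (hD : Nonempty D) [Finite D] : Finite (canonModel D hD).D :=
  ‹Finite D›

theorem canonModel_isFull (D : Type) (hD : Nonempty D) : (canonModel D hD).IsFull :=
  Set.eq_univ_of_forall fun p => ⟨p, Set.mem_univ _, rfl⟩

/-- For every finite X₀ ⊆ X, X₀ ∪ {η} does not id-entail θ; moreover the
canonical full id-model over a domain with k+1 elements (k the largest n with χₙ ∈ X₀)
supports every member of X₀ and η, but not θ. -/
theorem finite_subsets_do_not_entail_theta (X₀ : Set (Formula sigAB))
    (hsub : X₀ ⊆ Set.range chi) (hfin : X₀.Finite) :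
    (¬ EntailsId (X₀ ∪ {etaAB}) thetaAB) ∧
    (∀ k : ℕ, chi k ∈ X₀ → (∀ n, chi n ∈ X₀ → n ≤ k) →
      ∀ (D : Type) (hD : Nonempty D), Nat.card D = k + 1 →
        (∀ φ ∈ X₀, ∀ g : ℕ → D, Support (canonModel D hD) Set.univ g φ) ∧
        (∀ g : ℕ → D, Support (canonModel D hD) Set.univ g etaAB) ∧
        (∀ g : ℕ → D, ¬ Support (canonModel D hD) Set.univ g thetaAB)) := by
  have support_X₀ (D : Type) (hD : Nonempty D) [Finite D]
      (hX₀ : ∀ φ ∈ X₀, ∃ n ≤ Nat.card D, chi n = φ) :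
      ∀ φ ∈ X₀, ∀ g : ℕ → D, Support (canonModel D hD) Set.univ g φ := by
    intro φ hφ g
    obtain ⟨n, hn, rfl⟩ := hX₀ φ hφ
    exact support_chi_of_le_card (canonModel_isId D hD) hn _ g
  refine ⟨fun hent => ?_, fun k _ hmax D hD hcard => ?_⟩
  · obtain ⟨k, hk⟩ := hfin.exists_le_of_subset_range hsub
    have hD : Nonempty (Fin (k + 1)) := ⟨0⟩
    refine not_support_thetaAB_of_isFull (canonModel_isFull _ hD)
      (hent _ (canonModel_isId _ hD) Set.univ (fun _ => (0 : Fin (k + 1))) ?_)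
    rintro φ (hφ | rfl)
    · refine support_X₀ _ hD (fun ψ hψ => ?_) φ hφ _
      obtain ⟨n, hn, hψ⟩ := hk ψ hψ
      exact ⟨n, by rw [Nat.card_fin]; omega, hψ⟩
    · exact support_etaAB_of_finite (canonModel_isId _ hD)
  · have : Finite D := Nat.finite_of_card_ne_zero (by omega)
    refine ⟨support_X₀ D hD fun φ hφ => ?_,
      fun g => support_etaAB_of_finite (canonModel_isId D hD),
      fun g => not_support_thetaAB_of_isFull (canonModel_isFull D hD)⟩
    obtain ⟨n, rfl⟩ := hsub hφ
    exact ⟨n, by have := hmax n hφ; omega, rfl⟩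

end InqBQ
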